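/- arXiv:2004.10940 — 2 statements merged into one kernel-verified Lean document; each statement's English description precedes it below -/
import Mathlib

section
/- The sets Γ_k = ⋃_{l∈ℤ} B(2^l·[k,k+1)), k ≥ 0, are pairwise disjoint and their union equals (ℝ⁺ × ℝ⁺) ∖ Δ, where Δ is the diagonal of ℝ⁺ × ℝ⁺. Moreover, for every dyadic interval I = I^j_k there exists one and only one J ∈ D^0 such that B(I) = B(2^l J) for some l ∈ ℤ, namely J = I^0_k = [k, k+1). -/
open MeasureTheory Set
open scoped ENNReal

noncomputable section

/-- The dyadic interval `I^j_k = [k 2^{-j}, (k+1) 2^{-j})` of `ℝ⁺`. -/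
def dyI (j : ℤ) (k : ℕ) : Set ℝ := Set.Ico ((k : ℝ) * 2 ^ (-j)) (((k : ℝ) + 1) * 2 ^ (-j))

/-- The family `D` of dyadic intervals of `ℝ⁺`. -/
def IsDyadic (I : Set ℝ) : Prop := ∃ (j : ℤ) (k : ℕ), I = dyI j k

/-- `I(x,y)`: the smallest dyadic interval containing both `x` and `y`. -/
def dyInt (x y : ℝ) : Set ℝ := ⋂₀ {I : Set ℝ | IsDyadic I ∧ x ∈ I ∧ y ∈ I}

/-- The dyadic distance `δ(x,y) = |I(x,y)|`, with `δ(x,x) = 0`. -/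
def dyDist (x y : ℝ) : ℝ := if x = y then 0 else (volume (dyInt x y)).toReal

/-- The `l`-th dyadic ancestor of a dyadic interval: the unique dyadic interval
containing it whose measure is `2^l` times larger. -/
def dyAncestor (l : ℕ) (I : Set ℝ) : Set ℝ :=
  ⋂₀ {J : Set ℝ | IsDyadic J ∧ I ⊆ J ∧ volume J = 2 ^ l * volume I}

/-- The butterfly of the interval `[a, b)`:
`B = (I⁺ × I⁻) ∪ (I⁻ × I⁺)` where `I⁻, I⁺` are the two halves. -/
def bflyI (a b : ℝ) : Set (ℝ × ℝ) :=
  (Set.Ico ((a + b) / 2) b ×ˢ Set.Ico a ((a + b) / 2)) ∪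
    (Set.Ico a ((a + b) / 2) ×ˢ Set.Ico ((a + b) / 2) b)

/-- The butterfly `B(I^j_k)`. -/
def bfly (j : ℤ) (k : ℕ) : Set (ℝ × ℝ) := bflyI ((k : ℝ) * 2 ^ (-j)) (((k : ℝ) + 1) * 2 ^ (-j))

/-- The butterfly of an interval given as a set. -/
def bflySet (I : Set ℝ) : Set (ℝ × ℝ) := bflyI (sInf I) (sSup I)

/-- `Γ_k = ⋃_{l ∈ ℤ} B(2^l · [k, k+1))`. -/
def Gam (k : ℕ) : Set (ℝ × ℝ) := ⋃ l : ℤ, bflyI ((k : ℝ) * 2 ^ l) (((k : ℝ) + 1) * 2 ^ l)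

/-- The basic Haar wavelet `h^0_0 = 1_{[0,1/2)} - 1_{[1/2,1)}`. -/
def haar0 (x : ℝ) : ℝ :=
  Set.indicator (Set.Ico (0 : ℝ) (1 / 2)) (fun _ => 1) x
    - Set.indicator (Set.Ico (1 / 2 : ℝ) 1) (fun _ => 1) x

/-- The Haar wavelet `h^j_k(x) = 2^{j/2} h^0_0(2^j x - k)`, supported in `I^j_k`. -/
def haar (j : ℤ) (k : ℕ) (x : ℝ) : ℝ := (2 : ℝ) ^ ((j : ℝ) / 2) * haar0 (2 ^ j * x - (k : ℝ))

/-- The finite linear span of the Haar system. -/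
def HaarSpan (f : ℝ → ℝ) : Prop :=
  ∃ (F : Finset (ℤ × ℕ)) (c : ℤ × ℕ → ℝ), f = fun x => ∑ p ∈ F, c p * haar p.1 p.2 x

/-- `Ω_m(x,y) = δ(x,y) Σ_{I ∈ D} m(I) h_I(x) h_I(y)`. -/
def Omega (m : Set ℝ → ℝ) (x y : ℝ) : ℝ :=
  dyDist x y * ∑' p : ℤ × ℕ, m (dyI p.1 p.2) * (haar p.1 p.2 x * haar p.1 p.2 y)

/-- The dyadic fractional Laplacian `(-Δ)^{s/2}_{dy} f = Σ_{h ∈ H} |I(h)|^{-s} ⟨f, h⟩ h`. -/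
def dyLap (s : ℝ) (f : ℝ → ℝ) (x : ℝ) : ℝ :=
  ∑' p : ℤ × ℕ,
    (volume (dyI p.1 p.2)).toReal ^ (-s) * (∫ y, f y * haar p.1 p.2 y) * haar p.1 p.2 x

/-- The partial dyadic derivative `D^s_{(i)} f = Σ_{j ∈ ℤ} 2^{sj} ⟨f, h^j_i⟩ h^j_i`. -/
def Dsi (s : ℝ) (i : ℕ) (f : ℝ → ℝ) (x : ℝ) : ℝ :=
  ∑' j : ℤ, (2 : ℝ) ^ (s * (j : ℝ)) * (∫ y, f y * haar j i y) * haar j i x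

/-- The Haar multiplier `T_{(i)} g = Σ_{j ∈ ℤ} ⟨g, h^j_i⟩ h^j_i`. -/
def Ti (i : ℕ) (g : ℝ → ℝ) (x : ℝ) : ℝ := ∑' j : ℤ, (∫ y, g y * haar j i y) * haar j i x

/-- The directional derivative `D^s_m f = Σ_{h ∈ H} m(h) |I(h)|^{-s} ⟨f, h⟩ h`. -/
def Dsm (s : ℝ) (m : ℤ × ℕ → ℝ) (f : ℝ → ℝ) (x : ℝ) : ℝ :=
  ∑' p : ℤ × ℕ,
    m p * ((volume (dyI p.1 p.2)).toReal ^ (-s) * (∫ y, f y * haar p.1 p.2 y)) * haar p.1 p.2 x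

/-- The Haar multiplier `T_m g = Σ_{h ∈ H} m(h) ⟨g, h⟩ h`. -/
def Tm (m : ℤ × ℕ → ℝ) (g : ℝ → ℝ) (x : ℝ) : ℝ :=
  ∑' p : ℤ × ℕ, m p * (∫ y, g y * haar p.1 p.2 y) * haar p.1 p.2 x

/-- The component kernels `K_{(i)}(x,y) = Σ_{j ∈ ℤ} h^j_i(x) h^j_i(y)`. -/
def Kker (i : ℕ) (x y : ℝ) : ℝ := ∑' j : ℤ, haar j i x * haar j i y

open Classical in
/-- The multiplier `m_i` with `m_i(I^j_k) = 1` if `k = i` and `0` otherwise. -/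
def mInd (i : ℕ) (I : Set ℝ) : ℝ := if ∃ j : ℤ, I = dyI j i then 1 else 0

/-- The dyadic energy form `E^δ_s(f)`. -/
def dyEnergy (s : ℝ) (f : ℝ → ℝ) : ℝ :=
  ∫ x in Set.Ici (0 : ℝ), ∫ y in Set.Ici (0 : ℝ), (f x - f y) ^ 2 * dyDist x y ^ (-(1 + 2 * s))

/-!
The point `(x, y)` lies in the butterfly of `[k 2^l, (k+1) 2^l)` exactly when
`⌊x / 2^l⌋ = ⌊y / 2^l⌋ = k` but `⌊x / 2^(l-1)⌋ ≠ ⌊y / 2^(l-1)⌋`: `2^l` is the finest dyadic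
scale at which `x` and `y` share an interval, and `k` is the index of that interval. Agreement
at one scale propagates to all coarser ones, and two distinct points of `ℝ⁺` agree at coarse
scales but not at scales below `|x - y|`, so this splitting scale exists and is unique. This
gives the partition; and since `B(I^j_k) ⊆ Γ_k` is nonempty, a butterfly lies in one class only.
-/

lemma mem_Ico_mul_zpow_iff_floor_eq {x : ℝ} {n m : ℤ} :
    x ∈ Ico ((n : ℝ) * 2 ^ m) (((n : ℝ) + 1) * 2 ^ m) ↔ ⌊x / 2 ^ m⌋ = n := by
  have h2 : (0 : ℝ) < 2 ^ m := by positivity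
  rw [mem_Ico, Int.floor_eq_iff, le_div_iff₀ h2, div_lt_iff₀ h2]

lemma floor_div_two_zpow_add_one (x : ℝ) (m : ℤ) :
    ⌊x / 2 ^ (m + 1)⌋ = ⌊x / 2 ^ m⌋ / 2 := by
  rw [zpow_add_one₀ two_ne_zero, ← div_div]
  exact_mod_cast Int.floor_div_natCast (x / 2 ^ m) 2

lemma floor_div_zpow_eq_of_le {x y : ℝ} {m m' : ℤ} (h : m ≤ m')
    (hm : ⌊x / 2 ^ m⌋ = ⌊y / 2 ^ m⌋) : ⌊x / 2 ^ m'⌋ = ⌊y / 2 ^ m'⌋ := by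
  induction m', h using Int.leInduction with
  | base => exact hm
  | succ n _ ih => rw [floor_div_two_zpow_add_one, floor_div_two_zpow_add_one, ih]

lemma abs_sub_lt_zpow_of_floor_div_eq {x y : ℝ} {m : ℤ}
    (h : ⌊x / 2 ^ m⌋ = ⌊y / 2 ^ m⌋) : |x - y| < 2 ^ m := by
  have h2 : (0 : ℝ) < 2 ^ m := by positivity
  have := Int.abs_sub_lt_one_of_floor_eq_floor h
  rwa [← sub_div, abs_div, abs_of_pos h2, div_lt_one h2] at this

lemma mem_bflyI_iff {k : ℕ} {l : ℤ} {x y : ℝ} :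
    (x, y) ∈ bflyI ((k : ℝ) * 2 ^ l) (((k : ℝ) + 1) * 2 ^ l) ↔
      ⌊x / 2 ^ l⌋ = k ∧ ⌊y / 2 ^ l⌋ = k ∧ ⌊x / 2 ^ (l - 1)⌋ ≠ ⌊y / 2 ^ (l - 1)⌋ := by
  obtain ⟨m, rfl⟩ : ∃ m, l = m + 1 := ⟨l - 1, by ring⟩
  have hpow : (2 : ℝ) ^ (m + 1) = 2 * 2 ^ m := by rw [zpow_add_one₀ two_ne_zero, mul_comm]
  have hleft : Ico ((k : ℝ) * 2 ^ (m + 1))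
      (((k : ℝ) * 2 ^ (m + 1) + ((k : ℝ) + 1) * 2 ^ (m + 1)) / 2) =
      Ico (((2 * k : ℤ) : ℝ) * 2 ^ m) ((((2 * k : ℤ) : ℝ) + 1) * 2 ^ m) := by
    rw [hpow]; push_cast; ring_nf
  have hright : Ico (((k : ℝ) * 2 ^ (m + 1) + ((k : ℝ) + 1) * 2 ^ (m + 1)) / 2)
      (((k : ℝ) + 1) * 2 ^ (m + 1)) =
      Ico (((2 * k + 1 : ℤ) : ℝ) * 2 ^ m) ((((2 * k + 1 : ℤ) : ℝ) + 1) * 2 ^ m) := by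
    rw [hpow]; push_cast; ring_nf
  simp only [bflyI, mem_union, mem_prod, hleft, hright, mem_Ico_mul_zpow_iff_floor_eq,
    floor_div_two_zpow_add_one, add_sub_cancel_right]
  omega

lemma eq_of_mem_bflyI_of_mem_bflyI {x y : ℝ} {k k' : ℕ} {l l' : ℤ}
    (h : (x, y) ∈ bflyI ((k : ℝ) * 2 ^ l) (((k : ℝ) + 1) * 2 ^ l))
    (h' : (x, y) ∈ bflyI ((k' : ℝ) * 2 ^ l') (((k' : ℝ) + 1) * 2 ^ l')) : k = k' := by
  obtain ⟨hx, hy, hne⟩ := mem_bflyI_iff.1 h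
  obtain ⟨hx', hy', hne'⟩ := mem_bflyI_iff.1 h'
  obtain rfl : l = l' := by
    by_contra hll
    rcases lt_or_gt_of_ne hll with hlt | hlt
    · exact hne' (floor_div_zpow_eq_of_le (by omega) (hx.trans hy.symm))
    · exact hne (floor_div_zpow_eq_of_le (by omega) (hx'.trans hy'.symm))
  exact_mod_cast hx.symm.trans hx'

lemma exists_floor_div_zpow_eq_and_ne {x y : ℝ} (hx : 0 ≤ x) (hy : 0 ≤ y) (hxy : x ≠ y) :
    ∃ l : ℤ, ⌊x / 2 ^ l⌋ = ⌊y / 2 ^ l⌋ ∧ ⌊x / 2 ^ (l - 1)⌋ ≠ ⌊y / 2 ^ (l - 1)⌋ := by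
  obtain ⟨n, hn, -⟩ := exists_mem_Ico_zpow (abs_sub_pos.2 hxy) one_lt_two
  have hbdd : ∀ z : ℤ, ⌊x / 2 ^ z⌋ = ⌊y / 2 ^ z⌋ → n ≤ z := fun z hz =>
    ((zpow_lt_zpow_iff_right₀ one_lt_two).1 (hn.trans_lt (abs_sub_lt_zpow_of_floor_div_eq hz))).le
  obtain ⟨N, -, hN⟩ := exists_mem_Ico_zpow (x := max x y + 1) (by positivity) one_lt_two
  have hzero : ∀ z, 0 ≤ z → z ≤ max x y → ⌊z / 2 ^ (N + 1)⌋ = 0 := fun z hz hzm =>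
    mem_Ico_mul_zpow_iff_floor_eq.1 ⟨by simpa using hz, by push_cast; linarith⟩
  obtain ⟨l, hl, hmin⟩ := Int.exists_least_of_bdd ⟨n, hbdd⟩
    ⟨N + 1, (hzero x hx (le_max_left x y)).trans (hzero y hy (le_max_right x y)).symm⟩
  exact ⟨l, hl, fun h => by linarith [hmin _ h]⟩

lemma disjoint_Gam_of_ne {k k' : ℕ} (hk : k ≠ k') : Disjoint (Gam k) (Gam k') := by
  simp only [Gam, disjoint_iUnion_left, disjoint_iUnion_right]
  exact fun l l' => disjoint_left.2 fun p hp hp' => hk (eq_of_mem_bflyI_of_mem_bflyI hp hp')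

lemma iUnion_Gam :
    (⋃ k : ℕ, Gam k) = (Ici (0 : ℝ) ×ˢ Ici (0 : ℝ)) \ {p : ℝ × ℝ | p.1 = p.2} := by
  ext ⟨x, y⟩
  simp only [Gam, mem_iUnion, mem_sdiff, mem_prod, mem_Ici, mem_ofPred_eq]
  constructor
  · rintro ⟨k, l, h⟩
    obtain ⟨hx, hy, hne⟩ := mem_bflyI_iff.1 h
    have hnonneg : ∀ z : ℝ, ⌊z / 2 ^ l⌋ = k → 0 ≤ z := fun z hz =>
      (by positivity : (0 : ℝ) ≤ ((k : ℤ) : ℝ) * 2 ^ l).trans (mem_Ico_mul_zpow_iff_floor_eq.2 hz).1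
    exact ⟨⟨hnonneg x hx, hnonneg y hy⟩, fun hxy => hne (by rw [hxy])⟩
  · rintro ⟨⟨hx, hy⟩, hxy⟩
    obtain ⟨l, hl, hne⟩ := exists_floor_div_zpow_eq_and_ne hx hy hxy
    have hk : 0 ≤ ⌊x / 2 ^ l⌋ := Int.floor_nonneg.2 (by positivity)
    refine ⟨⌊x / 2 ^ l⌋.toNat, l, mem_bflyI_iff.2 ?_⟩
    rw [Int.toNat_of_nonneg hk]
    exact ⟨rfl, hl.symm, hne⟩

lemma bflyI_nonempty {a b : ℝ} (h : a < b) : (bflyI a b).Nonempty :=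
  ⟨((a + b) / 2, a), Or.inl ⟨⟨le_rfl, by linarith⟩, ⟨le_rfl, by linarith⟩⟩⟩

/-- the sets `Γ_k` are pairwise disjoint, their union is
`(ℝ⁺ × ℝ⁺) ∖ Δ`, and every butterfly `B(I^j_k)` is of the form `B(2^l J)` for one
and only one `J ∈ D^0`, namely `J = [k, k+1)`. -/
theorem Gam_pairwise_disjoint_union_and_unique_class :
    (∀ k k' : ℕ, k ≠ k' → Disjoint (Gam k) (Gam k')) ∧
    ((⋃ k : ℕ, Gam k) =
      (Set.Ici (0 : ℝ) ×ˢ Set.Ici (0 : ℝ)) \ {p : ℝ × ℝ | p.1 = p.2}) ∧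
    (∀ (j : ℤ) (k : ℕ),
      (∃ l : ℤ, bfly j k = bflyI ((k : ℝ) * 2 ^ l) (((k : ℝ) + 1) * 2 ^ l)) ∧
      (∀ k' : ℕ,
        (∃ l : ℤ, bfly j k = bflyI ((k' : ℝ) * 2 ^ l) (((k' : ℝ) + 1) * 2 ^ l)) →
        k' = k)) := by
  refine ⟨fun _ _ => disjoint_Gam_of_ne, iUnion_Gam, fun j k => ⟨⟨-j, rfl⟩, ?_⟩⟩
  rintro k' ⟨l, hl⟩
  obtain ⟨p, hp⟩ : (bfly j k).Nonempty := bflyI_nonempty (by gcongr; linarith)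
  by_contra hne
  exact disjoint_left.1 (disjoint_Gam_of_ne hne) (mem_iUnion_of_mem l (hl ▸ hp))
    (mem_iUnion_of_mem (-j) hp)
end
end

section
/- Let m : D → ℝ be bounded. For every x ≠ y in ℝ⁺, the sum Ω_m(x,y) = δ(x,y) Σ_{I∈D} m(I) h_I(x) h_I(y) converges absolutely and equals −m(I(x,y)) + Σ_{j≥1} 2^{-j} m(I^{(j)}(x,y)). -/
open MeasureTheory Set
open scoped ENNReal

noncomputable section

lemma two_zpow_pos' (j : ℤ) : (0:ℝ) < 2 ^ j := zpow_pos (by norm_num) j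

lemma mem_dyI' {j : ℤ} {k : ℕ} {x : ℝ} :
    x ∈ dyI j k ↔ (k : ℝ) ≤ 2 ^ j * x ∧ 2 ^ j * x < (k : ℝ) + 1 := by
  have h : (0:ℝ) < 2 ^ j := two_zpow_pos' j
  rw [dyI, Set.mem_Ico, zpow_neg, ← div_eq_mul_inv, ← div_eq_mul_inv,
    div_le_iff₀ h, lt_div_iff₀ h]
  constructor <;> rintro ⟨h1, h2⟩ <;> constructor <;> nlinarith

lemma mem_dyI {j : ℤ} {k : ℕ} {x : ℝ} :
    x ∈ dyI j k ↔ ⌊(2:ℝ) ^ j * x⌋ = (k : ℤ) := by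
  rw [mem_dyI', Int.floor_eq_iff]; push_cast; rfl

lemma floor_two_mul_div (t : ℝ) : ⌊t⌋ = ⌊2 * t⌋ / 2 := by
  obtain ⟨n, hn⟩ : ∃ n : ℤ, ⌊2 * t⌋ = n := ⟨_, rfl⟩
  have h1 : (n : ℝ) ≤ 2 * t := hn ▸ Int.floor_le _
  have h2 : 2 * t < n + 1 := by rw [← hn]; exact Int.lt_floor_add_one _
  rw [hn]
  have hf : ⌊t⌋ = n / 2 := by
    refine Int.floor_eq_iff.mpr ⟨?_, ?_⟩ <;>
    · have := Int.emod_two_eq n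
      have h3 : ((n / 2 : ℤ) : ℝ) * 2 + ((n % 2 : ℤ) : ℝ) = n := by
        exact_mod_cast
          (by omega : (n / 2) * 2 + n % 2 = n) ▸ (by push_cast; ring :
            ((n / 2 : ℤ) : ℝ) * 2 + ((n % 2 : ℤ) : ℝ) = (((n / 2) * 2 + n % 2 : ℤ) : ℝ))
      rcases this with h | h <;> rw [h] at h3 <;> push_cast at h3 ⊢ <;> nlinarith
  exact hf

lemma floor_pred (j : ℤ) (t : ℝ) : ⌊(2:ℝ) ^ j * t⌋ = ⌊(2:ℝ) ^ (j + 1) * t⌋ / 2 := by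
  rw [floor_two_mul_div ((2:ℝ) ^ j * t)]
  congr 2
  rw [zpow_add_one₀ (by norm_num : (2:ℝ) ≠ 0)]; ring

lemma floor_eq_mono_aux {x y : ℝ} :
    ∀ n : ℕ, ∀ j : ℤ, ⌊(2:ℝ) ^ (j + n) * x⌋ = ⌊(2:ℝ) ^ (j + n) * y⌋ →
      ⌊(2:ℝ) ^ j * x⌋ = ⌊(2:ℝ) ^ j * y⌋ := by
  intro n
  induction n with
  | zero => intro j h; simpa using h
  | succ n ih =>
    intro j h
    have h' : ⌊(2:ℝ) ^ ((j + 1) + n) * x⌋ = ⌊(2:ℝ) ^ ((j + 1) + n) * y⌋ := by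
      have : (j : ℤ) + (n + 1 : ℕ) = (j + 1) + n := by push_cast; ring
      rwa [this] at h
    have := ih (j + 1) h'
    rw [floor_pred j x, floor_pred j y, this]

lemma floor_eq_mono {x y : ℝ} {j j' : ℤ} (h : j ≤ j')
    (he : ⌊(2:ℝ) ^ j' * x⌋ = ⌊(2:ℝ) ^ j' * y⌋) :
    ⌊(2:ℝ) ^ j * x⌋ = ⌊(2:ℝ) ^ j * y⌋ := by
  have hj : j' = j + ((j' - j).toNat : ℤ) := by omega
  exact floor_eq_mono_aux (j' - j).toNat j (by rw [← hj]; exact he)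

lemma dyI_mono {x : ℝ} {j j' : ℤ} {k k' : ℕ} (h : j ≤ j')
    (hx : x ∈ dyI j k) (hx' : x ∈ dyI j' k') : dyI j' k' ⊆ dyI j k := by
  intro z hz
  rw [mem_dyI] at hx hx' hz ⊢
  exact (floor_eq_mono h (hz.trans hx'.symm)).trans hx

lemma haar0_left {t : ℝ} (h0 : 0 ≤ t) (h : t < 1/2) : haar0 t = 1 := by
  rw [haar0, Set.indicator_of_mem (by exact ⟨h0, h⟩),
    Set.indicator_of_notMem (by simp [Set.mem_Ico]; intro h'; linarith)]
  norm_num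

lemma haar0_right {t : ℝ} (h : 1/2 ≤ t) (h1 : t < 1) : haar0 t = -1 := by
  rw [haar0, Set.indicator_of_notMem (by simp [Set.mem_Ico]; intro h'; linarith),
    Set.indicator_of_mem (by exact ⟨h, h1⟩)]
  norm_num

lemma haar0_zero {t : ℝ} (h : t < 0 ∨ 1 ≤ t) : haar0 t = 0 := by
  rw [haar0, Set.indicator_of_notMem, Set.indicator_of_notMem]
  · norm_num
  · simp only [Set.mem_Ico]; rintro ⟨h1, h2⟩; rcases h with h | h <;> linarith
  · simp only [Set.mem_Ico]; rintro ⟨h1, h2⟩; rcases h with h | h <;> linarith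

lemma haar_eq_zero {j : ℤ} {k : ℕ} {x : ℝ} (h : x ∉ dyI j k) : haar j k x = 0 := by
  rw [haar, haar0_zero, mul_zero]
  rw [mem_dyI'] at h
  push_neg at h
  rcases lt_or_ge ((2:ℝ) ^ j * x) (k : ℝ) with h' | h'
  · left; linarith
  · right; linarith [h h']

lemma floor_succ_mem {j : ℤ} {k : ℕ} {x : ℝ} (hx : x ∈ dyI j k) :
    ⌊(2:ℝ) ^ (j+1) * x⌋ = 2 * k ∨ ⌊(2:ℝ) ^ (j+1) * x⌋ = 2 * k + 1 := by
  have h := mem_dyI.mp hx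
  rw [floor_pred j x] at h
  omega

lemma haar_apply_mem {j : ℤ} {k : ℕ} {x : ℝ} (hx : x ∈ dyI j k) :
    haar j k x = (2:ℝ) ^ ((j:ℝ)/2) *
      (if ⌊(2:ℝ) ^ (j+1) * x⌋ = 2 * (k : ℤ) then 1 else -1) := by
  obtain ⟨h1, h2⟩ := mem_dyI'.mp hx
  have hfl : ⌊(2:ℝ) ^ (j+1) * x⌋ = 2 * k ∨ ⌊(2:ℝ) ^ (j+1) * x⌋ = 2 * k + 1 :=
    floor_succ_mem hx
  have key : (2:ℝ) ^ (j+1) * x = 2 * ((2:ℝ) ^ j * x - k) + 2 * k := by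
    rw [zpow_add_one₀ (by norm_num : (2:ℝ) ≠ 0)]; ring
  rcases lt_or_ge ((2:ℝ) ^ j * x - k) (1/2) with hl | hl
  · have hfpos : ⌊(2:ℝ) ^ (j+1) * x⌋ = 2 * (k:ℤ) := by
      rw [Int.floor_eq_iff]
      push_cast
      constructor <;> nlinarith
    rw [haar, haar0_left (by linarith) hl, if_pos hfpos]
  · have hfneg : ⌊(2:ℝ) ^ (j+1) * x⌋ ≠ 2 * (k:ℤ) := by
      intro h
      have h1' := Int.floor_le ((2:ℝ)^(j+1)*x)
      have h2' := Int.lt_floor_add_one ((2:ℝ)^(j+1)*x)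
      rw [h] at h1' h2'
      push_cast at h1' h2'
      nlinarith
    rw [haar, haar0_right hl (by linarith), if_neg hfneg]

lemma rpow_half_sq (j : ℤ) : (2:ℝ) ^ ((j:ℝ)/2) * (2:ℝ) ^ ((j:ℝ)/2) = 2 ^ j := by
  rw [← Real.rpow_add (by norm_num : (0:ℝ) < 2),
    show (j:ℝ)/2 + (j:ℝ)/2 = ((j:ℤ):ℝ) by ring, Real.rpow_intCast]

lemma haar_mul_haar {j : ℤ} {k : ℕ} {x z : ℝ} (hx : x ∈ dyI j k) (hz : z ∈ dyI j k) :
    haar j k x * haar j k z =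
      if ⌊(2:ℝ) ^ (j+1) * x⌋ = ⌊(2:ℝ) ^ (j+1) * z⌋ then (2:ℝ) ^ j else -(2:ℝ) ^ j := by
  rw [haar_apply_mem hx, haar_apply_mem hz]
  have hfx := floor_succ_mem hx
  have hfz := floor_succ_mem hz
  have hne1 : (2*(k:ℤ)) ≠ 2*k+1 := by omega
  have hne2 : (2*(k:ℤ)+1) ≠ 2*k := by omega
  rcases hfx with hfx | hfx <;> rcases hfz with hfz | hfz <;>
    simp only [hfx, hfz, if_true, hne1, hne2, if_false, eq_self_iff_true, if_neg, if_pos] <;>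
    · have := rpow_half_sq j
      nlinarith [this]

lemma volume_dyI (j : ℤ) (k : ℕ) :
    volume (dyI j k) = ENNReal.ofReal ((2:ℝ) ^ (-j)) := by
  rw [dyI, Real.volume_Ico]
  congr 1
  ring

/-- for bounded `m : D → ℝ` the series defining `Ω_m(x,y)`
converges absolutely and
`δ(x,y) Σ_{I ∈ D} m(I) h_I(x) h_I(y) = -m(I(x,y)) + Σ_{j ≥ 1} 2^{-j} m(I^{(j)}(x,y))`. -/
theorem Omega_abs_convergent_and_formula (m : Set ℝ → ℝ)
    (hbdd : ∃ C : ℝ, ∀ (j : ℤ) (k : ℕ), |m (dyI j k)| ≤ C)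
    (x y : ℝ) (hx : 0 ≤ x) (hy : 0 ≤ y) (hxy : x ≠ y) :
    Summable (fun p : ℤ × ℕ => |m (dyI p.1 p.2) * (haar p.1 p.2 x * haar p.1 p.2 y)|) ∧
    dyDist x y * ∑' p : ℤ × ℕ, m (dyI p.1 p.2) * (haar p.1 p.2 x * haar p.1 p.2 y) =
      -m (dyInt x y) +
        ∑' j : ℕ, (2 : ℝ) ^ (-((j : ℤ) + 1)) * m (dyAncestor (j + 1) (dyInt x y)) := by
  classical
  obtain ⟨C, hC⟩ := hbdd
  have hC0 : 0 ≤ C := le_trans (abs_nonneg _) (hC 0 0)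
  set P : ℤ → Prop := fun j => ⌊(2:ℝ)^j * x⌋ = ⌊(2:ℝ)^j * y⌋ with hP
  have hbddP : ∃ b : ℤ, ∀ z : ℤ, P z → z ≤ b := by
    obtain ⟨n, hn⟩ := pow_unbounded_of_one_lt (|x - y|⁻¹) (one_lt_two (α := ℝ))
    refine ⟨n, fun j hj => ?_⟩
    have habs : |(2:ℝ)^j * x - (2:ℝ)^j * y| < 1 := Int.abs_sub_lt_one_of_floor_eq_floor hj
    have hxy' : 0 < |x - y| := abs_pos.mpr (sub_ne_zero.mpr hxy)
    rw [← mul_sub, abs_mul, abs_of_pos (two_zpow_pos' j)] at habs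
    have h1 : (1:ℝ) < 2 ^ n * |x - y| := by
      have := mul_inv_cancel₀ (ne_of_gt hxy')
      nlinarith
    have h2 : (2:ℝ)^j < 2^(n:ℤ) := by
      rw [zpow_natCast]
      exact lt_of_mul_lt_mul_right (by nlinarith) (le_of_lt hxy')
    exact le_of_lt ((zpow_right_strictMono₀ (by norm_num : (1:ℝ) < 2)).lt_iff_lt.mp h2)
  have hinhP : ∃ j : ℤ, P j := by
    obtain ⟨n, hn⟩ := pow_unbounded_of_one_lt (max x y) (one_lt_two (α := ℝ))
    refine ⟨-n, ?_⟩
    have hpos : (0:ℝ) < 2 ^ (-(n:ℤ)) := two_zpow_pos' _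
    have hinv : (2:ℝ) ^ (-(n:ℤ)) * 2 ^ (n:ℤ) = 1 := by
      rw [← zpow_add₀ (by norm_num : (2:ℝ) ≠ 0)]; norm_num
    have h2n : (2:ℝ) ^ (n:ℤ) = 2 ^ n := zpow_natCast 2 n
    have hfx : ⌊(2:ℝ)^(-(n:ℤ)) * x⌋ = 0 := by
      rw [Int.floor_eq_zero_iff]
      refine ⟨mul_nonneg (le_of_lt hpos) hx, ?_⟩
      have : x < 2 ^ n := lt_of_le_of_lt (le_max_left x y) hn
      nlinarith
    have hfy : ⌊(2:ℝ)^(-(n:ℤ)) * y⌋ = 0 := by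
      rw [Int.floor_eq_zero_iff]
      refine ⟨mul_nonneg (le_of_lt hpos) hy, ?_⟩
      have : y < 2 ^ n := lt_of_le_of_lt (le_max_right x y) hn
      nlinarith
    exact hfx.trans hfy.symm
  obtain ⟨j₀, hPj₀, hmax⟩ := Int.exists_greatest_of_bdd hbddP hinhP
  have hPle : ∀ j : ℤ, j ≤ j₀ → P j := fun j hj => floor_eq_mono hj hPj₀
  have hnot : ¬ P (j₀ + 1) := fun h => by have := hmax _ h; omega
  set K : ℤ → ℕ := fun j => (⌊(2:ℝ)^j * x⌋).toNat with hK
  have hKcast : ∀ j : ℤ, ((K j : ℤ)) = ⌊(2:ℝ)^j * x⌋ := fun j =>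
    Int.toNat_of_nonneg (Int.floor_nonneg.mpr (mul_nonneg (le_of_lt (two_zpow_pos' j)) hx))
  have hKx : ∀ j : ℤ, x ∈ dyI j (K j) := fun j => mem_dyI.mpr (hKcast j).symm
  have hKy : ∀ j : ℤ, j ≤ j₀ → y ∈ dyI j (K j) := fun j hj =>
    mem_dyI.mpr ((hPle j hj).symm.trans (hKcast j).symm)
  have hdyInt : dyInt x y = dyI j₀ (K j₀) := by
    apply subset_antisymm
    · exact sInter_subset_of_mem ⟨⟨j₀, K j₀, rfl⟩, hKx j₀, hKy j₀ le_rfl⟩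
    · refine subset_sInter ?_
      rintro I ⟨⟨j, k, rfl⟩, hxI, hyI⟩
      have hPj : P j := (mem_dyI.mp hxI).trans (mem_dyI.mp hyI).symm
      exact dyI_mono (hmax j hPj) hxI (hKx j₀)
  have hofR : ∀ l : ℕ, ((2:ℝ≥0∞)) ^ l = ENNReal.ofReal ((2:ℝ) ^ l) := by
    intro l
    rw [ENNReal.ofReal_pow (by norm_num)]
    norm_num
  have hanc : ∀ l : ℕ, dyAncestor l (dyI j₀ (K j₀)) = dyI (j₀ - l) (K (j₀ - l)) := by
    intro l
    have hvol : volume (dyI (j₀ - l) (K (j₀ - l))) = 2 ^ l * volume (dyI j₀ (K j₀)) := by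
      rw [volume_dyI, volume_dyI, hofR l, ← ENNReal.ofReal_mul (by positivity)]
      congr 1
      rw [← zpow_natCast (2:ℝ) l, ← zpow_add₀ (by norm_num : (2:ℝ) ≠ 0)]
      congr 1
      ring
    apply subset_antisymm
    · exact sInter_subset_of_mem
        ⟨⟨_, _, rfl⟩, dyI_mono (by omega) (hKx _) (hKx j₀), hvol⟩
    · refine subset_sInter ?_
      rintro J ⟨⟨j, k, rfl⟩, hsub, hvolJ⟩
      rw [volume_dyI, volume_dyI, hofR l, ← ENNReal.ofReal_mul (by positivity),
        ENNReal.ofReal_eq_ofReal_iff (by positivity) (by positivity),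
        ← zpow_natCast (2:ℝ) l, ← zpow_add₀ (by norm_num : (2:ℝ) ≠ 0)] at hvolJ
      have hj : j = j₀ - l := by
        have := (zpow_right_strictMono₀ (by norm_num : (1:ℝ) < 2)).injective hvolJ
        omega
      subst hj
      have hxJ : x ∈ dyI (j₀ - l) k := hsub (hKx j₀)
      have hk : k = K (j₀ - l) := by
        have h1 := mem_dyI.mp hxJ
        have h2 := hKcast (j₀ - l)
        omega
      rw [hk]
  set f : ℤ × ℕ → ℝ := fun p => m (dyI p.1 p.2) * (haar p.1 p.2 x * haar p.1 p.2 y) with hf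
  set ι : ℕ → ℤ × ℕ := fun n => (j₀ - n, K (j₀ - n)) with hι
  have hinj : Function.Injective ι := by
    intro a b hab
    have h := congrArg Prod.fst hab
    simp only [hι] at h
    omega
  have hsupp : ∀ p : ℤ × ℕ, p ∉ Set.range ι → f p = 0 := by
    rintro ⟨j, k⟩ hp
    by_contra hne
    have hhx : haar j k x ≠ 0 := fun h => hne (by simp [hf, h])
    have hhy : haar j k y ≠ 0 := fun h => hne (by simp [hf, h])
    have hxJ : x ∈ dyI j k := by by_contra h; exact hhx (haar_eq_zero h)
    have hyJ : y ∈ dyI j k := by by_contra h; exact hhy (haar_eq_zero h)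
    have hPj : P j := (mem_dyI.mp hxJ).trans (mem_dyI.mp hyJ).symm
    have hjle : j ≤ j₀ := hmax j hPj
    have hkK : k = K j := by
      have h1 := mem_dyI.mp hxJ
      have h2 := hKcast j
      omega
    refine hp ⟨(j₀ - j).toNat, ?_⟩
    have hco : j₀ - ((j₀ - j).toNat : ℤ) = j := by omega
    simp only [hι, hco, hkK]
  have hprod_top : haar j₀ (K j₀) x * haar j₀ (K j₀) y = -(2:ℝ) ^ j₀ := by
    rw [haar_mul_haar (hKx j₀) (hKy j₀ le_rfl), if_neg hnot]
  have hprod_lt : ∀ j : ℤ, j < j₀ → haar j (K j) x * haar j (K j) y = (2:ℝ) ^ j := by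
    intro j hj
    rw [haar_mul_haar (hKx j) (hKy j (le_of_lt hj)), if_pos (hPle (j+1) (by omega))]
  have habsprod : ∀ j : ℤ, j ≤ j₀ → |haar j (K j) x * haar j (K j) y| = (2:ℝ)^j := by
    intro j hj
    rcases eq_or_lt_of_le hj with rfl | hjlt
    · rw [hprod_top, abs_neg, abs_of_pos (two_zpow_pos' _)]
    · rw [hprod_lt j hjlt, abs_of_pos (two_zpow_pos' _)]
  have habs_le : ∀ n : ℕ, |f (ι n)| ≤ (C * (2:ℝ)^j₀) * (1/2)^n := by
    intro n
    have hzle : (2:ℝ)^(j₀ - (n:ℤ)) = (2:ℝ)^j₀ * (1/2)^n := by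
      rw [zpow_sub₀ (by norm_num : (2:ℝ) ≠ 0), zpow_natCast, div_pow, one_pow, div_eq_mul_inv,
        div_eq_mul_inv]
      ring
    have : |f (ι n)| = |m (dyI (j₀ - n) (K (j₀ - n)))| * (2:ℝ)^(j₀ - (n:ℤ)) := by
      simp only [hf, hι]
      rw [abs_mul, habsprod (j₀ - (n:ℤ)) (by omega)]
    rw [this, hzle, ← mul_assoc]
    have h1 : |m (dyI (j₀ - n) (K (j₀ - n)))| ≤ C := hC _ _
    have h2 : (0:ℝ) < (2:ℝ)^j₀ := two_zpow_pos' _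
    have h3 : (0:ℝ) ≤ (1/2:ℝ)^n := by positivity
    have := mul_le_mul_of_nonneg_right (mul_le_mul_of_nonneg_right h1 (le_of_lt h2)) h3
    linarith
  have hsummg : Summable (fun n => |f (ι n)|) :=
    Summable.of_nonneg_of_le (fun n => abs_nonneg _) habs_le
      ((summable_geometric_of_lt_one (by norm_num) (by norm_num)).mul_left _)
  have hsumabs : Summable (fun p : ℤ × ℕ => |f p|) := by
    rw [← hinj.summable_iff (f := fun p => |f p|) (fun p hp => by show |f p| = 0; rw [hsupp p hp, abs_zero])]
    exact hsummg
  have hsumg : Summable (fun n => f (ι n)) := hsummg.of_abs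
  have htsum : ∑' p : ℤ × ℕ, f p = ∑' n : ℕ, f (ι n) :=
    (hinj.tsum_eq (Function.support_subset_iff'.mpr hsupp)).symm
  have hsplit : ∑' n : ℕ, f (ι n) = f (ι 0) + ∑' n : ℕ, f (ι (n+1)) := Summable.tsum_eq_zero_add hsumg
  have hdist : dyDist x y = (2:ℝ)^(-j₀) := by
    rw [dyDist, if_neg hxy, hdyInt, volume_dyI,
      ENNReal.toReal_ofReal (le_of_lt (two_zpow_pos' _))]
  have hι0 : ι 0 = (j₀, K j₀) := by simp [hι]
  have hg0 : f (ι 0) = -((2:ℝ)^j₀ * m (dyI j₀ (K j₀))) := by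
    rw [hι0]
    simp only [hf]
    rw [hprod_top]
    ring
  have hgs : ∀ n : ℕ, f (ι (n+1)) =
      (2:ℝ)^(j₀ - ((n:ℤ)+1)) * m (dyI (j₀ - ((n:ℤ)+1)) (K (j₀ - ((n:ℤ)+1)))) := by
    intro n
    simp only [hf, hι]
    push_cast
    rw [hprod_lt _ (by omega)]
    ring
  refine ⟨hsumabs, ?_⟩
  rw [htsum, hsplit, hdist, mul_add, hg0, hdyInt]
  have hu : (2:ℝ)^(-j₀) * (2:ℝ)^j₀ = 1 := by
    rw [← zpow_add₀ (by norm_num : (2:ℝ) ≠ 0)]; norm_num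
  congr 1
  · linear_combination (-(m (dyI j₀ (K j₀)))) * hu
  · rw [← tsum_mul_left]
    apply tsum_congr
    intro n
    rw [hgs n, hanc (n+1)]
    have he : (2:ℝ)^(-j₀) * (2:ℝ)^(j₀ - ((n:ℤ)+1)) = (2:ℝ)^(-((n:ℤ)+1)) := by
      rw [← zpow_add₀ (by norm_num : (2:ℝ) ≠ 0)]
      congr 1
      ring
    push_cast
    linear_combination m (dyI (j₀ - ((n:ℤ)+1)) (K (j₀ - ((n:ℤ)+1)))) * he
end
end
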